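/- arXiv:1301.6058 — 3 statements merged into one kernel-verified Lean document; each statement's English description precedes it below -/
import Mathlib

section
/- Fix b > 0 and positive weights a_1,…,a_T > 0. Then Σ_{t=1}^T a_t x_tᵀ A_t^{−1} x_t ≤ ln det( (1/b)·A_T ). -/
/-!
By the matrix determinant lemma, `A_{t-1} = A_t - a_t x_t x_tᵀ` gives
`det A_{t-1} = det A_t · (1 - a_t x_tᵀ A_t⁻¹ x_t)`; the last factor is positive since both
determinants are, and `log (1 - q) ≤ -q` turns this into
`a_t x_tᵀ A_t⁻¹ x_t ≤ log det A_t - log det A_{t-1}`. Summing telescopes to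
`log det A_T - log det (b I) = log det ((1/b) A_T)`.
-/

open Matrix Finset

namespace Matrix

variable {n : Type*} [Fintype n] [DecidableEq n]

theorem det_add_vecMulVec {α : Type*} [CommRing α] {M : Matrix n n α} (hM : IsUnit M.det)
    (u v : n → α) : (M + vecMulVec u v).det = M.det * (1 + v ⬝ᵥ (M⁻¹ *ᵥ u)) := by
  rw [vecMulVec_eq Unit, det_add_replicateCol_mul_replicateRow hM,
    det_unique (1 + _ : Matrix Unit Unit α), Matrix.mul_assoc, ← replicateCol_mulVec]
  simp [replicateRow_mul_replicateCol_apply]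

theorem dotProduct_inv_mulVec_le_log_det_sub {M N : Matrix n n ℝ} (hM : 0 < M.det)
    (hN : 0 < N.det) {u v : n → ℝ} (hMN : N = M + vecMulVec u v) :
    v ⬝ᵥ (N⁻¹ *ᵥ u) ≤ Real.log N.det - Real.log M.det := by
  set q := v ⬝ᵥ (N⁻¹ *ᵥ u)
  have hdet : M.det = N.det * (1 - q) := by
    have hM' : M = N + vecMulVec (-u) v := by simp [hMN]
    rw [hM', det_add_vecMulVec hN.ne'.isUnit, mulVec_neg, dotProduct_neg, ← sub_eq_add_neg]
  have hq : 0 < 1 - q := pos_of_mul_pos_right (hdet ▸ hM) hN.le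
  have := Real.log_le_sub_one_of_pos hq
  rw [hdet, Real.log_mul hN.ne' hq.ne']
  linarith

theorem posDef_smul_one_add_sum_smul_vecMulVec {ι : Type*} (s : Finset ι) {b : ℝ} (hb : 0 < b)
    {a : ι → ℝ} (ha : ∀ i ∈ s, 0 ≤ a i) (x : ι → n → ℝ) :
    (b • 1 + ∑ i ∈ s, a i • vecMulVec (x i) (x i)).PosDef :=
  (PosDef.one.smul hb).add_posSemidef <| posSemidef_sum s fun i hi =>
    (posSemidef_vecMulVec_self_star (x i)).smul (ha i hi)

end Matrix

theorem Finset.sum_Icc_one_le_sub_of_le {α : Type*} [AddCommGroup α] [PartialOrder α]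
    [IsOrderedAddMonoid α] {f g : ℕ → α} {T : ℕ} (h : ∀ t ∈ Icc 1 T, f t ≤ g t - g (t - 1)) :
    ∑ t ∈ Icc 1 T, f t ≤ g T - g 0 := by
  induction T with
  | zero => simp
  | succ T ih =>
    calc ∑ t ∈ Icc 1 (T + 1), f t = ∑ t ∈ Icc 1 T, f t + f (T + 1) := sum_Icc_succ_top (by omega) f
      _ ≤ (g T - g 0) + (g (T + 1) - g T) :=
        add_le_add (ih fun t ht => h t (Icc_subset_Icc_right (by omega) ht))
          (h (T + 1) (by simp))
      _ = g (T + 1) - g 0 := by abel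

/-- `Σ_{t=1}^T a_t x_tᵀ A_t⁻¹ x_t ≤ ln det((1/b)·A_T)`. -/
theorem stmt_8 {d T : ℕ} (b : ℝ) (hb : 0 < b)
    (a : ℕ → ℝ) (ha : ∀ t ∈ Icc 1 T, 0 < a t)
    (x : ℕ → (Fin d → ℝ))
    (A : ℕ → Matrix (Fin d) (Fin d) ℝ)
    (hA : ∀ t, A t = b • (1 : Matrix (Fin d) (Fin d) ℝ)
        + ∑ s ∈ Icc 1 t, a s • vecMulVec (x s) (x s)) :
    ∑ t ∈ Icc 1 T, a t * (x t ⬝ᵥ ((A t)⁻¹ *ᵥ x t))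
      ≤ Real.log (((1 / b) • A T).det) := by
  have hdet_pos : ∀ t ≤ T, 0 < (A t).det := fun t ht => by
    rw [hA t]
    exact (posDef_smul_one_add_sum_smul_vecMulVec _ hb
      (fun s hs => (ha s (Icc_subset_Icc_right ht hs)).le) x).det_pos
  have hdet_zero : (A 0).det = b ^ d := by simp [hA 0]
  have hlog : Real.log ((1 / b) • A T).det = Real.log (A T).det - Real.log (A 0).det := by
    rw [det_smul, Real.log_mul (by positivity) (hdet_pos T le_rfl).ne', hdet_zero,
      Fintype.card_fin, Real.log_pow, Real.log_pow, one_div, Real.log_inv]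
    ring
  rw [hlog]
  refine sum_Icc_one_le_sub_of_le (g := fun t => Real.log (A t).det) fun t ht => ?_
  obtain ⟨s, rfl⟩ : ∃ s, t = s + 1 := ⟨t - 1, by grind⟩
  have hsT : s + 1 ≤ T := (mem_Icc.1 ht).2
  have hstep : A (s + 1) = A s + vecMulVec (a (s + 1) • x (s + 1)) (x (s + 1)) := by
    rw [hA, hA, sum_Icc_succ_top (by omega), smul_vecMulVec, add_assoc]
  simpa [mulVec_smul] using
    dotProduct_inv_mulVec_le_log_det_sub (hdet_pos s (by omega)) (hdet_pos _ hsT) hstep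
end

section
/- Assume ‖x_t‖ ≤ 1 for all t = 1,…,T and b > 1, and let the weights be a_t = 1/(1 − x_tᵀ A_{t−1}^{−1} x_t) for t = 1,…,T. Then for every u ∈ ℝ^d, the weighted loss satisfies L_T^a(u) ≤ L_T(u) + (b/(b−1)) · S · ln det( (1/b)·A_T ), where S = sup_{1 ≤ t ≤ T} (y_t − uᵀx_t)². -/
/-!
Since `A_{t-1} ⪰ b·I`, the quantity `r_t = x_tᵀ A_{t-1}⁻¹ x_t` lies in `[0, 1/b]`, so
`a_t = 1/(1 - r_t)` lies in `[1, b/(b-1)]` and `a_t - 1 = r_t a_t ≤ (b/(b-1)) r_t ≤ (b/(b-1)) ln a_t`.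
By the matrix determinant lemma `det A_t = det A_{t-1} · (1 + a_t r_t) = det A_{t-1} · a_t`, hence
`ln det(A_T / b) = Σ_t ln a_t`. Summing `a_t ℓ_t ≤ ℓ_t + (a_t - 1) S` over `t` gives the bound.
-/

open Matrix Finset

theorem Matrix.det_add_vecMulVec_s9 {n R : Type*} [Fintype n] [DecidableEq n] [CommRing R]
    {M : Matrix n n R} (hM : IsUnit M.det) (u v : n → R) :
    (M + vecMulVec u v).det = M.det * (1 + v ⬝ᵥ (M⁻¹ *ᵥ u)) := by
  rw [vecMulVec_eq Unit, det_add_replicateCol_mul_replicateRow hM, Matrix.mul_assoc,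
    ← replicateCol_mulVec]
  simp [det_unique, replicateRow_mul_replicateCol_apply]

section LowerBoundedQuadraticForm

variable {n : Type*} [Fintype n] {M : Matrix n n ℝ} {b : ℝ}

theorem le_dotProduct_mulVec_add_smul_vecMulVec (hM : ∀ v, b * (v ⬝ᵥ v) ≤ v ⬝ᵥ (M *ᵥ v))
    {c : ℝ} (hc : 0 ≤ c) (x v : n → ℝ) :
    b * (v ⬝ᵥ v) ≤ v ⬝ᵥ ((M + c • vecMulVec x x) *ᵥ v) := by
  have hrank_one : v ⬝ᵥ (vecMulVec x x *ᵥ v) = (x ⬝ᵥ v) ^ 2 := by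
    simp [vecMulVec_mulVec, dotProduct_comm v x, sq]
  rw [add_mulVec, dotProduct_add, smul_mulVec, dotProduct_smul, smul_eq_mul, hrank_one]
  nlinarith [hM v, mul_nonneg hc (sq_nonneg (x ⬝ᵥ v))]

variable [DecidableEq n]

theorem isUnit_det_of_le_dotProduct_mulVec (hb : 0 < b)
    (hM : ∀ v, b * (v ⬝ᵥ v) ≤ v ⬝ᵥ (M *ᵥ v)) : IsUnit M.det := by
  rw [isUnit_iff_ne_zero, Ne, ← exists_mulVec_eq_zero_iff]
  rintro ⟨v, hv, hMv⟩
  have hvv : b * (v ⬝ᵥ v) ≤ 0 := by simpa [hMv] using hM v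
  exact hv (dotProduct_self_eq_zero.mp
    (le_antisymm (nonpos_of_mul_nonpos_right hvv hb) (dotProduct_self_star_nonneg v)))

theorem dotProduct_inv_mulVec_bounds (hb : 0 < b) (hM : ∀ v, b * (v ⬝ᵥ v) ≤ v ⬝ᵥ (M *ᵥ v))
    (x : n → ℝ) : 0 ≤ x ⬝ᵥ (M⁻¹ *ᵥ x) ∧ b * (x ⬝ᵥ (M⁻¹ *ᵥ x)) ≤ x ⬝ᵥ x := by
  set w := M⁻¹ *ᵥ x
  have hMw : M *ᵥ w = x := by
    rw [mulVec_mulVec, mul_nonsing_inv _ (isUnit_det_of_le_dotProduct_mulVec hb hM), one_mulVec]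
  have hw : b * (w ⬝ᵥ w) ≤ x ⬝ᵥ w := by simpa [hMw, dotProduct_comm w x] using hM w
  have hww : 0 ≤ w ⬝ᵥ w := dotProduct_self_star_nonneg w
  -- `b (x ⬝ w) ≤ x ⬝ x` is `0 ≤ ‖x - b w‖²` combined with `b ‖w‖² ≤ x ⬝ w`.
  have hsq : 0 ≤ (x - b • w) ⬝ᵥ (x - b • w) := dotProduct_self_star_nonneg _
  simp only [sub_dotProduct, dotProduct_sub, smul_dotProduct, dotProduct_smul, smul_eq_mul,
    dotProduct_comm w x] at hsq
  exact ⟨by nlinarith, by nlinarith [mul_le_mul_of_nonneg_left hw hb.le]⟩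

theorem dotProduct_inv_mulVec_mem_Icc (hb : 0 < b) (hM : ∀ v, b * (v ⬝ᵥ v) ≤ v ⬝ᵥ (M *ᵥ v))
    {x : n → ℝ} (hx : x ⬝ᵥ x ≤ 1) : x ⬝ᵥ (M⁻¹ *ᵥ x) ∈ Set.Icc 0 b⁻¹ := by
  obtain ⟨h0, hle⟩ := dotProduct_inv_mulVec_bounds hb hM x
  exact ⟨h0, le_of_mul_le_mul_left (by rw [mul_inv_cancel₀ hb.ne']; linarith) hb⟩

end LowerBoundedQuadraticForm

section Weight

variable {b r : ℝ}

theorem one_le_one_div_one_sub (hb : 1 < b) (hr : r ∈ Set.Icc 0 b⁻¹) : 1 ≤ 1 / (1 - r) :=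
  one_le_one_div (by linarith [hr.2, inv_lt_one_of_one_lt₀ hb]) (by linarith [hr.1])

theorem one_div_one_sub_sub_one_le_mul_log (hb : 1 < b) (hr : r ∈ Set.Icc 0 b⁻¹) :
    1 / (1 - r) - 1 ≤ b / (b - 1) * Real.log (1 / (1 - r)) := by
  obtain ⟨hr0, hrb⟩ := hr
  have hb0 : 0 < b := by linarith
  have h1r : (b - 1) / b ≤ 1 - r := by
    rw [sub_div, div_self hb0.ne', one_div]; linarith
  have hpos : 0 < 1 - r := lt_of_lt_of_le (div_pos (by linarith) hb0) h1r
  have hlog : r ≤ Real.log (1 / (1 - r)) := by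
    rw [one_div, Real.log_inv]; linarith [Real.log_le_sub_one_of_pos hpos]
  calc 1 / (1 - r) - 1 = r * (1 / (1 - r)) := by field_simp; ring
    _ ≤ r * (b / (b - 1)) := by
        refine mul_le_mul_of_nonneg_left ?_ hr0
        rw [one_div_le hpos (div_pos hb0 (by linarith)), one_div_div]; exact h1r
    _ ≤ b / (b - 1) * Real.log (1 / (1 - r)) := by
        rw [mul_comm]; gcongr

end Weight

section Recursion

variable {n : Type*} [Fintype n] [DecidableEq n] {b : ℝ} {T : ℕ} {x : ℕ → n → ℝ} {a : ℕ → ℝ}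
  {A : ℕ → Matrix n n ℝ}

structure IsSelfConsistentRecursion (b : ℝ) (T : ℕ) (x : ℕ → n → ℝ) (a : ℕ → ℝ)
    (A : ℕ → Matrix n n ℝ) : Prop where
  zero : A 0 = b • 1
  weight : ∀ t ∈ Icc 1 T, a t = 1 / (1 - x t ⬝ᵥ ((A (t - 1))⁻¹ *ᵥ x t))
  succ : ∀ t ∈ Icc 1 T, A t = A (t - 1) + a t • vecMulVec (x t) (x t)

theorem le_dotProduct_mulVec_of_recursion (hb : 1 < b) (hx : ∀ t ∈ Icc 1 T, x t ⬝ᵥ x t ≤ 1)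
    (hA : IsSelfConsistentRecursion b T x a A) :
    ∀ t ≤ T, ∀ v, b * (v ⬝ᵥ v) ≤ v ⬝ᵥ (A t *ᵥ v) := by
  intro t
  induction t with
  | zero => simp [hA.zero, smul_mulVec]
  | succ t ih =>
    intro htT
    have ht : t + 1 ∈ Icc 1 T := mem_Icc.mpr ⟨by omega, htT⟩
    have hr := dotProduct_inv_mulVec_mem_Icc (by linarith) (ih (by omega)) (hx _ ht)
    have hat : a (t + 1) = 1 / (1 - x (t + 1) ⬝ᵥ ((A t)⁻¹ *ᵥ x (t + 1))) := by
      simpa using hA.weight _ ht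
    have ha1 : 1 ≤ a (t + 1) := hat ▸ one_le_one_div_one_sub hb hr
    rw [hA.succ _ ht, Nat.add_sub_cancel]
    exact le_dotProduct_mulVec_add_smul_vecMulVec (ih (by omega)) (by linarith) _

theorem dotProduct_inv_mulVec_mem_Icc_of_recursion (hb : 1 < b)
    (hx : ∀ t ∈ Icc 1 T, x t ⬝ᵥ x t ≤ 1) (hA : IsSelfConsistentRecursion b T x a A)
    {t : ℕ} (ht : t ∈ Icc 1 T) : x t ⬝ᵥ ((A (t - 1))⁻¹ *ᵥ x t) ∈ Set.Icc 0 b⁻¹ :=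
  dotProduct_inv_mulVec_mem_Icc (by linarith)
    (le_dotProduct_mulVec_of_recursion hb hx hA _ (by grind)) (hx t ht)

theorem weight_bounds_of_recursion (hb : 1 < b)
    (hx : ∀ t ∈ Icc 1 T, x t ⬝ᵥ x t ≤ 1) (hA : IsSelfConsistentRecursion b T x a A)
    {t : ℕ} (ht : t ∈ Icc 1 T) : 1 ≤ a t ∧ a t - 1 ≤ b / (b - 1) * Real.log (a t) := by
  have hr := dotProduct_inv_mulVec_mem_Icc_of_recursion hb hx hA ht
  rw [hA.weight t ht]
  exact ⟨one_le_one_div_one_sub hb hr, one_div_one_sub_sub_one_le_mul_log hb hr⟩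

theorem det_eq_det_mul_weight_of_recursion (hb : 1 < b)
    (hx : ∀ t ∈ Icc 1 T, x t ⬝ᵥ x t ≤ 1) (hA : IsSelfConsistentRecursion b T x a A)
    {t : ℕ} (ht : t ∈ Icc 1 T) : (A t).det = (A (t - 1)).det * a t := by
  have hr := dotProduct_inv_mulVec_mem_Icc_of_recursion hb hx hA ht
  have hunit := isUnit_det_of_le_dotProduct_mulVec (by linarith)
    (le_dotProduct_mulVec_of_recursion hb hx hA (t - 1) (by grind))
  have h1r : 1 - x t ⬝ᵥ ((A (t - 1))⁻¹ *ᵥ x t) ≠ 0 := by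
    linarith [hr.2, inv_lt_one_of_one_lt₀ hb]
  rw [hA.succ t ht, ← smul_vecMulVec, Matrix.det_add_vecMulVec_s9 hunit, mulVec_smul, dotProduct_smul,
    smul_eq_mul, hA.weight t ht]
  field_simp
  ring

theorem det_one_div_smul_eq_prod_of_recursion (hb : 1 < b)
    (hx : ∀ t ∈ Icc 1 T, x t ⬝ᵥ x t ≤ 1) (hA : IsSelfConsistentRecursion b T x a A) :
    ∀ t ≤ T, ((1 / b) • A t).det = ∏ s ∈ Icc 1 t, a s := by
  intro t
  induction t with
  | zero =>
    intro _
    rw [hA.zero, smul_smul, one_div_mul_cancel (by linarith), one_smul, det_one]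
    rfl
  | succ t ih =>
    intro htT
    have ht : t + 1 ∈ Icc 1 T := mem_Icc.mpr ⟨by omega, htT⟩
    rw [det_smul, det_eq_det_mul_weight_of_recursion hb hx hA ht, Nat.add_sub_cancel,
      prod_Icc_succ_top (by omega), ← ih (by omega), det_smul]
    ring

end Recursion

theorem sum_mul_le_sum_add_mul_log_prod {ι : Type*} {s : Finset ι} {a ℓ : ι → ℝ} {c S : ℝ}
    (ha : ∀ i ∈ s, 1 ≤ a i) (hlog : ∀ i ∈ s, a i - 1 ≤ c * Real.log (a i))
    (hℓ : ∀ i ∈ s, ℓ i ≤ S) (hS : 0 ≤ S) :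
    ∑ i ∈ s, a i * ℓ i ≤ ∑ i ∈ s, ℓ i + c * S * Real.log (∏ i ∈ s, a i) := by
  rw [Real.log_prod fun i hi => (zero_lt_one.trans_le (ha i hi)).ne', mul_sum,
    ← sum_add_distrib]
  refine sum_le_sum fun i hi => ?_
  nlinarith [mul_le_mul_of_nonneg_left (hℓ i hi) (sub_nonneg.2 (ha i hi)),
    mul_le_mul_of_nonneg_right (hlog i hi) hS]

/-- with self-consistent weights, for every `u`,
`L_T^a(u) ≤ L_T(u) + (b/(b−1))·S·ln det((1/b)·A_T)` where
`S = sup_{1≤t≤T} (y_t − uᵀx_t)²`. -/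
theorem stmt_9 {d T : ℕ} (b : ℝ) (hb : 1 < b)
    (x : ℕ → (Fin d → ℝ)) (hx : ∀ t ∈ Icc 1 T, x t ⬝ᵥ x t ≤ 1)
    (y : ℕ → ℝ)
    (a : ℕ → ℝ) (A : ℕ → Matrix (Fin d) (Fin d) ℝ)
    (hA0 : A 0 = b • (1 : Matrix (Fin d) (Fin d) ℝ))
    (ha : ∀ t ∈ Icc 1 T, a t = 1 / (1 - x t ⬝ᵥ ((A (t - 1))⁻¹ *ᵥ x t)))
    (hArec : ∀ t ∈ Icc 1 T, A t = A (t - 1) + a t • vecMulVec (x t) (x t))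
    (u : Fin d → ℝ) (S : ℝ)
    (hS : S = sSup ((fun t => (y t - u ⬝ᵥ x t) ^ 2) '' Set.Icc 1 T)) :
    ∑ t ∈ Icc 1 T, a t * (y t - u ⬝ᵥ x t) ^ 2
      ≤ (∑ t ∈ Icc 1 T, (y t - u ⬝ᵥ x t) ^ 2)
        + b / (b - 1) * S * Real.log (((1 / b) • A T).det) := by
  have hle_S : ∀ t ∈ Icc 1 T, (y t - u ⬝ᵥ x t) ^ 2 ≤ S := fun t ht =>
    hS ▸ le_csSup ((Set.finite_Icc 1 T).image _).bddAbove ⟨t, by simpa using ht, rfl⟩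
  have hS_nonneg : 0 ≤ S := hS ▸ Real.sSup_nonneg (by rintro _ ⟨t, -, rfl⟩; positivity)
  have hA : IsSelfConsistentRecursion b T x a A := ⟨hA0, ha, hArec⟩
  have hweight t (ht : t ∈ Icc 1 T) := weight_bounds_of_recursion hb hx hA ht
  rw [det_one_div_smul_eq_prod_of_recursion hb hx hA T le_rfl]
  exact sum_mul_le_sum_add_mul_log_prod (fun t ht => (hweight t ht).1)
    (fun t ht => (hweight t ht).2) hle_S hS_nonneg
end

section
/- Assume ‖x_t‖ ≤ 1 for all t = 1,…,T, b > 1, c > 0 with 1/b + 1/c < 1, and let a_t = 1/(1 − x_tᵀ A_{t−1}^{−1} x_t). Then the cumulative loss of WEMM is bounded as: L_T(WEMM) ≤ inf over all (u_1,…,u_T, ū) ∈ (ℝ^d)^{T+1} of ( b‖ū‖² + c·V_m + Σ_{t=1}^T (y_t − u_tᵀx_t)² + (S·b/(b−1))·ln det((1/b)·A_T) + T·S/( c(1 − b^{−1})² − (1 − b^{−1}) ) ), where V_m = Σ_{t=1}^T ‖u_t − ū‖² and S = sup_{1 ≤ t ≤ T} (y_t − u_tᵀx_t)². -/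
/-!
The quantity `Φ_t = b_tᵀ A_t⁻¹ b_t` is an exact potential for WEMM. Because
`a_t (1 - x_tᵀ A_{t-1}⁻¹ x_t) = 1`, the Sherman–Morrison formula takes the form
`A_t⁻¹ = A_{t-1}⁻¹ - v vᵀ` with `v = A_{t-1}⁻¹ x_t`, so each round raises the potential by exactly
`a_t y_t² - (y_t - ŷ_t)²`, and the matrix determinant lemma gives `det A_t = a_t det A_{t-1}`.
Hence `L_T = Σ a_t y_t² - Φ_T`, and since `Φ_T ≥ 2 b_Tᵀ ū - ūᵀ A_T ū`, the loss is at most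
`b‖ū‖² + Σ a_t (y_t - x_tᵀ ū)²`.

Since `A_{t-1} ≥ b I`, the weights satisfy `1 ≤ a_t ≤ τ⁻¹` with `τ = 1 - b⁻¹`, and hence
`a_t - 1 ≤ τ⁻¹ log a_t`. Splitting `y_t - x_tᵀ ū = e_t + δ_t` with `e_t = y_t - u_tᵀ x_t`,
Young's inequality with weight `cτ - 1 > 0` bounds each summand by
`e_t² + S τ⁻¹ log a_t + c ‖u_t - ū‖² + S / (cτ² - τ)`, and the logarithms add up to
`log det (A_T / b)`.
-/

open Matrix Finset Real

namespace Matrix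

section CommRing

variable {n R : Type*} [Fintype n] [CommRing R] {M : Matrix n n R}

lemma IsSymm.dotProduct_mulVec_comm (hM : M.IsSymm) (v w : n → R) :
    v ⬝ᵥ (M *ᵥ w) = w ⬝ᵥ (M *ᵥ v) := by
  rw [dotProduct_mulVec, ← mulVec_transpose, hM.eq, dotProduct_comm]

variable [DecidableEq n]

lemma mulVec_inv_mulVec (hM : IsUnit M.det) (v : n → R) : M *ᵥ (M⁻¹ *ᵥ v) = v := by
  rw [mulVec_mulVec, mul_nonsing_inv _ hM, one_mulVec]

lemma det_add_smul_vecMulVec_self (hM : IsUnit M.det) {x : n → R} {α : R}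
    (hα : α * (1 - x ⬝ᵥ (M⁻¹ *ᵥ x)) = 1) : (M + α • vecMulVec x x).det = α * M.det := by
  rw [← smul_vecMulVec, vecMulVec_eq Unit, det_add_replicateCol_mul_replicateRow hM,
    ← replicateRow_vecMul, det_unique (n := Unit), add_apply, one_apply_eq,
    replicateRow_mul_replicateCol_apply, ← dotProduct_mulVec, mulVec_smul, dotProduct_smul,
    smul_eq_mul]
  linear_combination (-M.det) * hα

lemma inv_add_smul_vecMulVec_self (hM : IsUnit M.det) {x : n → R} {α : R}
    (hα : α * (1 - x ⬝ᵥ (M⁻¹ *ᵥ x)) = 1) :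
    (M + α • vecMulVec x x)⁻¹ = M⁻¹ - vecMulVec (M⁻¹ *ᵥ x) (x ᵥ* M⁻¹) := by
  refine inv_eq_right_inv ?_
  rw [Matrix.add_mul, Matrix.mul_sub, Matrix.mul_sub, mul_nonsing_inv _ hM, mul_vecMulVec,
    mulVec_mulVec, mul_nonsing_inv _ hM, one_mulVec, Matrix.smul_mul, Matrix.smul_mul,
    vecMulVec_mul, vecMulVec_mul_vecMulVec, vecMulVec_smul, smul_smul, ← sub_smul,
    show α - α * (x ⬝ᵥ (M⁻¹ *ᵥ x)) = 1 by linear_combination hα, one_smul]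
  abel

lemma dotProduct_inv_add_smul_vecMulVec_self_mulVec (hM : IsUnit M.det) (hMs : M.IsSymm)
    {x : n → R} {α : R} (hα : α * (1 - x ⬝ᵥ (M⁻¹ *ᵥ x)) = 1) (B : n → R) (y : R) :
    (B + (α * y) • x) ⬝ᵥ ((M + α • vecMulVec x x)⁻¹ *ᵥ (B + (α * y) • x)) =
      B ⬝ᵥ (M⁻¹ *ᵥ B) + α * y ^ 2 - (y - B ⬝ᵥ (M⁻¹ *ᵥ x)) ^ 2 := by
  have hx : x ᵥ* M⁻¹ = M⁻¹ *ᵥ x := by rw [← mulVec_transpose, hMs.inv.eq]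
  have hB : x ⬝ᵥ (M⁻¹ *ᵥ B) = B ⬝ᵥ (M⁻¹ *ᵥ x) := hMs.inv.dotProduct_mulVec_comm x B
  rw [inv_add_smul_vecMulVec_self hM hα, hx, sub_mulVec, vecMulVec_mulVec, op_smul_eq_smul]
  simp only [mulVec_add, mulVec_smul, dotProduct_add, add_dotProduct, dotProduct_sub,
    dotProduct_smul, smul_dotProduct, smul_eq_mul, hB,
    dotProduct_comm (M⁻¹ *ᵥ x) B, dotProduct_comm (M⁻¹ *ᵥ x) x]
  linear_combination
    (2 * y * (B ⬝ᵥ (M⁻¹ *ᵥ x)) + α * y ^ 2 * (x ⬝ᵥ (M⁻¹ *ᵥ x)) - y ^ 2) * hα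

end CommRing

section LinearOrder

variable {n R : Type*} [Fintype n] [CommRing R] [LinearOrder R] [IsStrictOrderedRing R]

lemma dotProduct_self_nonneg (v : n → R) : 0 ≤ v ⬝ᵥ v :=
  sum_nonneg fun i _ => mul_self_nonneg (v i)

lemma sq_dotProduct_le (v w : n → R) : (v ⬝ᵥ w) ^ 2 ≤ (v ⬝ᵥ v) * (w ⬝ᵥ w) := by
  simpa only [dotProduct, ← sq] using sum_mul_sq_le_sq_mul_sq univ v w

end LinearOrder

section Real

variable {n : Type*} [DecidableEq n] {M : Matrix n n ℝ} {b : ℝ}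

lemma PosSemidef.posDef_of_sub_smul_one (hM : (M - b • 1).PosSemidef) (hb : 0 < b) :
    M.PosDef := by
  simpa using PosDef.posSemidef_add hM (PosDef.one.smul hb)

variable [Fintype n]

lemma PosSemidef.smul_dotProduct_self_le (hM : (M - b • 1).PosSemidef) (v : n → ℝ) :
    b * (v ⬝ᵥ v) ≤ v ⬝ᵥ (M *ᵥ v) := by
  have := hM.dotProduct_mulVec_nonneg v
  rw [star_trivial, sub_mulVec, smul_mulVec, one_mulVec, dotProduct_sub, dotProduct_smul,
    smul_eq_mul] at this
  linarith

lemma PosSemidef.dotProduct_inv_mulVec_self_le (hM : (M - b • 1).PosSemidef) (hb : 0 < b)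
    {x : n → ℝ} (hx : x ⬝ᵥ x ≤ 1) : x ⬝ᵥ (M⁻¹ *ᵥ x) ≤ b⁻¹ := by
  have hMu : M *ᵥ (M⁻¹ *ᵥ x) = x :=
    mulVec_inv_mulVec ((isUnit_iff_isUnit_det M).mp (hM.posDef_of_sub_smul_one hb).isUnit) x
  set u := M⁻¹ *ᵥ x
  have hcoer : b * (u ⬝ᵥ u) ≤ x ⬝ᵥ u := by
    simpa only [hMu, dotProduct_comm u x] using hM.smul_dotProduct_self_le u
  have hCS : (x ⬝ᵥ u) ^ 2 ≤ u ⬝ᵥ u :=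
    (sq_dotProduct_le x u).trans (mul_le_of_le_one_left (dotProduct_self_nonneg u) hx)
  have hs : 0 ≤ x ⬝ᵥ u := le_trans (by positivity [dotProduct_self_nonneg u]) hcoer
  rw [← one_div, le_div_iff₀ hb]
  nlinarith [mul_le_mul_of_nonneg_left hCS hb.le]

lemma PosDef.two_mul_dotProduct_sub_le (hM : M.PosDef) (B w : n → ℝ) :
    2 * (B ⬝ᵥ w) - w ⬝ᵥ (M *ᵥ w) ≤ B ⬝ᵥ (M⁻¹ *ᵥ B) := by
  have hMz : M *ᵥ (M⁻¹ *ᵥ B) = B :=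
    mulVec_inv_mulVec ((isUnit_iff_isUnit_det M).mp hM.isUnit) B
  have hsymm : (M⁻¹ *ᵥ B) ⬝ᵥ (M *ᵥ w) = w ⬝ᵥ B := by
    rw [(isHermitian_iff_isSymm.mp hM.isHermitian).dotProduct_mulVec_comm, hMz]
  have := hM.posSemidef.dotProduct_mulVec_nonneg (w - M⁻¹ *ᵥ B)
  rw [star_trivial, mulVec_sub, hMz, sub_dotProduct, dotProduct_sub, dotProduct_sub, hsymm,
    dotProduct_comm (M⁻¹ *ᵥ B) B, dotProduct_comm w B] at this
  linarith

end Real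

end Matrix

lemma sub_one_le_inv_mul_log {α τ : ℝ} (hα : 1 ≤ α) (hατ : α ≤ τ⁻¹) :
    α - 1 ≤ τ⁻¹ * log α := by
  have hα₀ : 0 < α := by linarith
  calc α - 1 = α * (1 - α⁻¹) := by field_simp
    _ ≤ τ⁻¹ * (1 - α⁻¹) :=
      mul_le_mul_of_nonneg_right hατ (sub_nonneg.mpr (inv_le_one_of_one_le₀ hα))
    _ ≤ τ⁻¹ * log α := mul_le_mul_of_nonneg_left (one_sub_inv_le_log_of_pos hα₀) (by linarith)

lemma mul_add_sq_le_sq_add_mul_log {τ c α e δ S : ℝ} (hcτ : 1 < c * τ) (hα : 1 ≤ α)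
    (hατ : α ≤ τ⁻¹) (he : e ^ 2 ≤ S) :
    α * (e + δ) ^ 2 ≤ e ^ 2 + S * τ⁻¹ * log α + c * δ ^ 2 + S / (c * τ ^ 2 - τ) := by
  have hτ : 0 < τ := inv_pos.mp (by linarith)
  set γ := c * τ - 1 with hγ
  have hγ₀ : 0 < γ := by linarith
  have hyoung : (e + δ) ^ 2 ≤ (1 + γ⁻¹) * e ^ 2 + (1 + γ) * δ ^ 2 := by
    have : 0 ≤ (e - γ * δ) ^ 2 / γ := by positivity
    field_simp at this ⊢
    nlinarith
  have hS : (α - 1) * e ^ 2 ≤ τ⁻¹ * log α * S :=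
    (mul_le_mul_of_nonneg_left he (sub_nonneg.mpr hα)).trans
      (mul_le_mul_of_nonneg_right (sub_one_le_inv_mul_log hα hατ) ((sq_nonneg e).trans he))
  have hc : α * (1 + γ) ≤ c := by
    calc α * (1 + γ) ≤ τ⁻¹ * (1 + γ) :=
        mul_le_mul_of_nonneg_right hατ (by linarith : (0 : ℝ) ≤ 1 + γ)
      _ = c := by rw [hγ]; field_simp; ring
  have hD : α * γ⁻¹ * e ^ 2 ≤ S / (c * τ ^ 2 - τ) := by
    calc α * γ⁻¹ * e ^ 2 ≤ τ⁻¹ * γ⁻¹ * S := by gcongr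
      _ = S / (c * τ ^ 2 - τ) := by rw [hγ]; field_simp
  nlinarith [mul_le_mul_of_nonneg_right hc (sq_nonneg δ)]

structure IsWEMMRun {n : Type*} [Fintype n] [DecidableEq n] (b : ℝ) (T : ℕ) (x : ℕ → n → ℝ)
    (a : ℕ → ℝ) (A : ℕ → Matrix n n ℝ) : Prop where
  dotProduct_self_le : ∀ t ∈ Icc 1 T, x t ⬝ᵥ x t ≤ 1
  zero : A 0 = b • 1
  weight : ∀ t ∈ Icc 1 T, a t = 1 / (1 - x t ⬝ᵥ ((A (t - 1))⁻¹ *ᵥ x t))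
  succ : ∀ t ∈ Icc 1 T, A t = A (t - 1) + a t • vecMulVec (x t) (x t)

namespace IsWEMMRun

variable {n : Type*} [Fintype n] [DecidableEq n] {b : ℝ} {T t : ℕ} {x : ℕ → n → ℝ} {a : ℕ → ℝ}
  {A : ℕ → Matrix n n ℝ}

lemma succ_of_lt (h : IsWEMMRun b T x a A) (ht : t < T) :
    A (t + 1) = A t + a (t + 1) • vecMulVec (x (t + 1)) (x (t + 1)) := by
  simpa using h.succ (t + 1) (mem_Icc.2 ⟨by omega, ht⟩)

lemma weight_succ (h : IsWEMMRun b T x a A) (ht : t < T) :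
    a (t + 1) = 1 / (1 - x (t + 1) ⬝ᵥ ((A t)⁻¹ *ᵥ x (t + 1))) := by
  simpa using h.weight (t + 1) (mem_Icc.2 ⟨by omega, ht⟩)

lemma dotProduct_inv_mulVec_le (h : IsWEMMRun b T x a A) (hb : 0 < b) (ht : t < T)
    (hA : (A t - b • 1).PosSemidef) : x (t + 1) ⬝ᵥ ((A t)⁻¹ *ᵥ x (t + 1)) ≤ b⁻¹ :=
  hA.dotProduct_inv_mulVec_self_le hb (h.dotProduct_self_le _ (mem_Icc.2 ⟨by omega, ht⟩))

lemma posSemidef_sub (h : IsWEMMRun b T x a A) (hb : 1 < b) :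
    ∀ t ≤ T, (A t - b • 1).PosSemidef := by
  intro t
  induction t with
  | zero => simp [h.zero, PosSemidef.zero]
  | succ t ih =>
    intro ht
    have hA := ih (by omega)
    have hr := (h.dotProduct_inv_mulVec_le (by linarith) ht hA).trans_lt
      (inv_lt_one_of_one_lt₀ hb)
    have ha : 0 ≤ a (t + 1) := by
      rw [h.weight_succ ht]
      exact (one_div_pos.mpr (by linarith)).le
    rw [h.succ_of_lt ht, add_sub_right_comm]
    refine hA.add (PosSemidef.smul ?_ ha)
    simpa using posSemidef_vecMulVec_self_star (x (t + 1))

lemma posDef (h : IsWEMMRun b T x a A) (hb : 1 < b) (ht : t ≤ T) : (A t).PosDef :=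
  (h.posSemidef_sub hb t ht).posDef_of_sub_smul_one (by linarith)

lemma isUnit_det (h : IsWEMMRun b T x a A) (hb : 1 < b) (ht : t ≤ T) : IsUnit (A t).det :=
  (isUnit_iff_isUnit_det _).mp (h.posDef hb ht).isUnit

lemma isSymm (h : IsWEMMRun b T x a A) (hb : 1 < b) (ht : t ≤ T) : (A t).IsSymm :=
  isHermitian_iff_isSymm.mp (h.posDef hb ht).isHermitian

lemma weight_mul_eq_one (h : IsWEMMRun b T x a A) (hb : 1 < b) (ht : t < T) :
    a (t + 1) * (1 - x (t + 1) ⬝ᵥ ((A t)⁻¹ *ᵥ x (t + 1))) = 1 := by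
  have hr := (h.dotProduct_inv_mulVec_le (by linarith) ht (h.posSemidef_sub hb t ht.le)).trans_lt
    (inv_lt_one_of_one_lt₀ hb)
  rw [h.weight_succ ht, one_div_mul_cancel (by linarith)]

lemma weight_mem_Icc (h : IsWEMMRun b T x a A) (hb : 1 < b) (ht : t ∈ Icc 1 T) :
    a t ∈ Set.Icc 1 (1 - b⁻¹)⁻¹ := by
  obtain ⟨s, rfl⟩ : ∃ s, t = s + 1 := ⟨t - 1, by grind⟩
  have hs : s < T := by grind
  have hr₀ : 0 ≤ x (s + 1) ⬝ᵥ ((A s)⁻¹ *ᵥ x (s + 1)) := by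
    simpa using (h.posDef hb hs.le).inv.posSemidef.dotProduct_mulVec_nonneg (x (s + 1))
  have hr := h.dotProduct_inv_mulVec_le (by linarith) hs (h.posSemidef_sub hb s hs.le)
  have hb' : b⁻¹ < 1 := inv_lt_one_of_one_lt₀ hb
  rw [h.weight_succ hs, one_div]
  exact ⟨one_le_inv₀ (by linarith) |>.mpr (by linarith), inv_anti₀ (by linarith) (by linarith)⟩

lemma eq_smul_one_add_sum (h : IsWEMMRun b T x a A) :
    ∀ t ≤ T, A t = b • 1 + ∑ s ∈ Icc 1 t, a s • vecMulVec (x s) (x s) := by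
  intro t
  induction t with
  | zero => simp [h.zero]
  | succ t ih =>
    intro ht
    rw [h.succ_of_lt ht, ih (by omega), sum_Icc_succ_top (by omega), add_assoc]

lemma det_eq (h : IsWEMMRun b T x a A) (hb : 1 < b) :
    ∀ t ≤ T, (A t).det = b ^ Fintype.card n * ∏ s ∈ Icc 1 t, a s := by
  intro t
  induction t with
  | zero => simp [h.zero]
  | succ t ih =>
    intro ht
    rw [h.succ_of_lt ht, det_add_smul_vecMulVec_self (h.isUnit_det hb (by omega))
      (h.weight_mul_eq_one hb ht), ih (by omega), prod_Icc_succ_top (by omega)]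
    ring

lemma log_det_smul_eq (h : IsWEMMRun b T x a A) (hb : 1 < b) :
    log ((1 / b) • A T).det = ∑ t ∈ Icc 1 T, log (a t) := by
  rw [det_smul, h.det_eq hb T le_rfl, ← mul_assoc, ← mul_pow, one_div_mul_cancel (by linarith),
    one_pow, one_mul, log_prod]
  exact fun t ht => (zero_lt_one.trans_le (h.weight_mem_Icc hb ht).1).ne'

lemma potential_eq {y : ℕ → ℝ} {B : ℕ → n → ℝ} (h : IsWEMMRun b T x a A) (hb : 1 < b)
    (hB : ∀ t, B t = ∑ s ∈ Icc 1 t, (a s * y s) • x s) :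
    ∀ t ≤ T, B t ⬝ᵥ ((A t)⁻¹ *ᵥ B t) =
      ∑ s ∈ Icc 1 t, (a s * y s ^ 2 - (y s - B (s - 1) ⬝ᵥ ((A (s - 1))⁻¹ *ᵥ x s)) ^ 2) := by
  intro t
  induction t with
  | zero => simp [hB 0]
  | succ t ih =>
    intro ht
    have hBs : B (t + 1) = B t + (a (t + 1) * y (t + 1)) • x (t + 1) := by
      rw [hB (t + 1), hB t, sum_Icc_succ_top (by omega)]
    rw [hBs, h.succ_of_lt ht, dotProduct_inv_add_smul_vecMulVec_self_mulVec
      (h.isUnit_det hb (by omega)) (h.isSymm hb (by omega)) (h.weight_mul_eq_one hb ht),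
      ih (by omega), sum_Icc_succ_top (by omega), Nat.add_sub_cancel]
    ring

lemma loss_le {y : ℕ → ℝ} {B : ℕ → n → ℝ} (h : IsWEMMRun b T x a A) (hb : 1 < b)
    (hB : ∀ t, B t = ∑ s ∈ Icc 1 t, (a s * y s) • x s) (w : n → ℝ) :
    ∑ t ∈ Icc 1 T, (y t - B (t - 1) ⬝ᵥ ((A (t - 1))⁻¹ *ᵥ x t)) ^ 2 ≤
      b * (w ⬝ᵥ w) + ∑ t ∈ Icc 1 T, a t * (y t - x t ⬝ᵥ w) ^ 2 := by
  have hAw : w ⬝ᵥ (A T *ᵥ w) = b * (w ⬝ᵥ w) + ∑ t ∈ Icc 1 T, a t * (x t ⬝ᵥ w) ^ 2 := by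
    simp only [h.eq_smul_one_add_sum T le_rfl, add_mulVec, smul_mulVec, one_mulVec, sum_mulVec,
      vecMulVec_mulVec, op_smul_eq_smul, dotProduct_add, dotProduct_sum, dotProduct_smul,
      smul_eq_mul, dotProduct_comm w (x _), sq]
  have hBw : B T ⬝ᵥ w = ∑ t ∈ Icc 1 T, a t * y t * (x t ⬝ᵥ w) := by
    simp only [hB T, sum_dotProduct, smul_dotProduct, smul_eq_mul]
  have hF := (h.posDef hb le_rfl).two_mul_dotProduct_sub_le (B T) w
  have hsq : ∑ t ∈ Icc 1 T, a t * (y t - x t ⬝ᵥ w) ^ 2 = ∑ t ∈ Icc 1 T, a t * y t ^ 2 -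
      2 * ∑ t ∈ Icc 1 T, a t * y t * (x t ⬝ᵥ w) + ∑ t ∈ Icc 1 T, a t * (x t ⬝ᵥ w) ^ 2 := by
    rw [mul_sum, ← sum_sub_distrib, ← sum_add_distrib]
    exact sum_congr rfl fun t _ => by ring
  have hpot := h.potential_eq hb hB T le_rfl
  rw [sum_sub_distrib] at hpot
  rw [hAw, hBw] at hF
  linarith

lemma weight_mul_sq_le (h : IsWEMMRun b T x a A) (hb : 1 < b) {c : ℝ}
    (hcτ : 1 < c * (1 - b⁻¹)) (ht : t ∈ Icc 1 T) {y S : ℝ} {u w : n → ℝ}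
    (hS : (y - u ⬝ᵥ x t) ^ 2 ≤ S) :
    a t * (y - x t ⬝ᵥ w) ^ 2 ≤ (y - u ⬝ᵥ x t) ^ 2 + S * (1 - b⁻¹)⁻¹ * log (a t) +
      c * ((u - w) ⬝ᵥ (u - w)) + S / (c * (1 - b⁻¹) ^ 2 - (1 - b⁻¹)) := by
  obtain ⟨ha₁, haτ⟩ := h.weight_mem_Icc hb ht
  have hc : 0 ≤ c := by nlinarith [inv_lt_one_of_one_lt₀ hb]
  have hδ : ((u - w) ⬝ᵥ x t) ^ 2 ≤ (u - w) ⬝ᵥ (u - w) :=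
    (sq_dotProduct_le _ _).trans
      (mul_le_of_le_one_right (dotProduct_self_nonneg _) (h.dotProduct_self_le t ht))
  rw [show y - x t ⬝ᵥ w = (y - u ⬝ᵥ x t) + (u - w) ⬝ᵥ x t by
    rw [sub_dotProduct, dotProduct_comm (x t) w]; ring]
  grw [mul_add_sq_le_sq_add_mul_log hcτ ha₁ haτ hS, hδ]

end IsWEMMRun

/-- the cumulative loss of WEMM is at most the infimum over all
tuples `(u_1,…,u_T, ū)` of
`b‖ū‖² + c·V_m + L_T(u_1,…,u_T) + (S·b/(b−1))·ln det((1/b)·A_T)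
  + T·S/(c(1 − b⁻¹)² − (1 − b⁻¹))`,
where `V_m = Σ‖u_t − ū‖²` and `S = sup_{1≤t≤T} (y_t − u_tᵀx_t)²`. -/
theorem stmt_18 {d T : ℕ} (b c : ℝ) (hb : 1 < b) (hc : 0 < c)
    (hbc : 1 / b + 1 / c < 1)
    (x : ℕ → (Fin d → ℝ)) (hx : ∀ t ∈ Icc 1 T, x t ⬝ᵥ x t ≤ 1)
    (y : ℕ → ℝ)
    (a : ℕ → ℝ) (A : ℕ → Matrix (Fin d) (Fin d) ℝ)
    (hA0 : A 0 = b • (1 : Matrix (Fin d) (Fin d) ℝ))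
    (ha : ∀ t ∈ Icc 1 T, a t = 1 / (1 - x t ⬝ᵥ ((A (t - 1))⁻¹ *ᵥ x t)))
    (hArec : ∀ t ∈ Icc 1 T, A t = A (t - 1) + a t • vecMulVec (x t) (x t))
    (Bv : ℕ → (Fin d → ℝ))
    (hBv : ∀ t, Bv t = ∑ s ∈ Icc 1 t, (a s * y s) • x s) :
    ∑ t ∈ Icc 1 T, (y t - Bv (t - 1) ⬝ᵥ ((A (t - 1))⁻¹ *ᵥ x t)) ^ 2
      ≤ ⨅ p : (ℕ → Fin d → ℝ) × (Fin d → ℝ),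
          (b * (p.2 ⬝ᵥ p.2)
            + c * ∑ t ∈ Icc 1 T, ((p.1 t - p.2) ⬝ᵥ (p.1 t - p.2))
            + ∑ t ∈ Icc 1 T, (y t - p.1 t ⬝ᵥ x t) ^ 2
            + sSup ((fun t => (y t - p.1 t ⬝ᵥ x t) ^ 2) '' Set.Icc 1 T) * b / (b - 1)
                * Real.log (((1 / b) • A T).det)
            + (T : ℝ) * sSup ((fun t => (y t - p.1 t ⬝ᵥ x t) ^ 2) '' Set.Icc 1 T)
                / (c * (1 - b⁻¹) ^ 2 - (1 - b⁻¹))) := by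
  have hrun : IsWEMMRun b T x a A := ⟨hx, hA0, ha, hArec⟩
  have hcτ : 1 < c * (1 - b⁻¹) := by
    rw [one_div, one_div] at hbc
    nlinarith [mul_inv_cancel₀ hc.ne']
  refine le_ciInf fun ⟨u, w⟩ => ?_
  set S := sSup ((fun t => (y t - u t ⬝ᵥ x t) ^ 2) '' Set.Icc 1 T)
  have hS : ∀ t ∈ Icc 1 T, (y t - u t ⬝ᵥ x t) ^ 2 ≤ S := fun t ht =>
    le_csSup ((Set.finite_Icc 1 T).image _).bddAbove ⟨t, by simpa using ht, rfl⟩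
  calc _ ≤ b * (w ⬝ᵥ w) + ∑ t ∈ Icc 1 T, a t * (y t - x t ⬝ᵥ w) ^ 2 := hrun.loss_le hb hBv w
    _ ≤ b * (w ⬝ᵥ w) + ∑ t ∈ Icc 1 T, ((y t - u t ⬝ᵥ x t) ^ 2 +
          S * (1 - b⁻¹)⁻¹ * log (a t) + c * ((u t - w) ⬝ᵥ (u t - w)) +
          S / (c * (1 - b⁻¹) ^ 2 - (1 - b⁻¹))) := by
      grw [sum_le_sum fun t ht => hrun.weight_mul_sq_le hb hcτ ht (hS t ht)]
    _ = _ := by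
      rw [hrun.log_det_smul_eq hb, sum_add_distrib, sum_add_distrib, sum_add_distrib, ← mul_sum,
        ← mul_sum, sum_const, Nat.card_Icc, nsmul_eq_mul, Nat.add_sub_cancel]
      field_simp
      ring
end
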